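/- Let Π ∈ ℝ^{R×J} and x ∈ ℝ^J with x_j ≥ 0 for all j, and suppose the columns { (Π_{1 j},…,Π_{R j}) : j with x_j > 0 } span ℝ^R. Let D = { b ∈ ℝ^R : Σ_{i=1}^{R} b_i Π_{i j} > 0 for every j = 1,…,J }. Then f_row(·, x, Π) is strictly convex on D. -/

import Mathlib

/-- The row-subproblem objective
`f_row(b, x, Π) = Σ_r b_r − Σ_j x_j · log(Σ_r b_r Π_{r j})`. -/
noncomputable def frow {R J : ℕ} (b : Fin R → ℝ) (x : Fin J → ℝ)
    (P : Matrix (Fin R) (Fin J) ℝ) : ℝ :=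
  ∑ r, b r - ∑ j, x j * Real.log (∑ r, b r * P r j)

/-!
On `D`, the objective is the linear function `b ↦ Σ_r b_r` minus `g ∘ φ`, where
`g y = Σ_{x_j > 0} x_j log y_j` is strictly concave on the positive orthant and
`φ b = (Σ_r b_r Π_{r j})_{x_j > 0}` is linear. The spanning hypothesis says exactly that `φ` is
injective, and precomposing a strictly concave function with an injective linear map keeps it
strictly concave.
-/

open Set Function Finset

theorem StrictConcaveOn.comp_linearMap_of_injective {𝕜 E F β : Type*} [Semiring 𝕜]
    [PartialOrder 𝕜] [AddCommMonoid E] [AddCommMonoid F] [AddCommMonoid β] [PartialOrder β]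
    [Module 𝕜 E] [Module 𝕜 F] [SMul 𝕜 β] {f : F → β} {s : Set F}
    (hf : StrictConcaveOn 𝕜 s f) (g : E →ₗ[𝕜] F) (hg : Injective g) :
    StrictConcaveOn 𝕜 (g ⁻¹' s) (f ∘ g) :=
  ⟨hf.1.linear_preimage g, fun x hx y hy hxy a b ha hb hab => by
    simpa only [Function.comp_apply, map_add, map_smul] using
      hf.2 hx hy (hg.ne hxy) ha hb hab⟩

theorem StrictConcaveOn.smul {𝕜 E β : Type*} [CommSemiring 𝕜] [PartialOrder 𝕜]
    [AddCommMonoid E] [AddCommMonoid β] [PartialOrder β] [Module 𝕜 E] [Module 𝕜 β]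
    [PosSMulStrictMono 𝕜 β] {s : Set E} {f : E → β} {c : 𝕜} (hc : 0 < c)
    (hf : StrictConcaveOn 𝕜 s f) : StrictConcaveOn 𝕜 s fun x => c • f x :=
  ⟨hf.1, fun x hx y hy hxy a b ha hb hab =>
    calc a • c • f x + b • c • f y = c • (a • f x + b • f y) := by
          rw [smul_add, smul_comm c, smul_comm c]
      _ < c • f (a • x + b • y) := smul_lt_smul_of_pos_left (hf.2 hx hy hxy ha hb hab) hc⟩

theorem StrictConcaveOn.sum_pi {𝕜 ι β : Type*} {E : ι → Type*} [Fintype ι] [Semiring 𝕜]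
    [PartialOrder 𝕜] [∀ i, AddCommMonoid (E i)] [∀ i, Module 𝕜 (E i)]
    [AddCommMonoid β] [PartialOrder β] [IsOrderedCancelAddMonoid β] [Module 𝕜 β]
    {s : ∀ i, Set (E i)} {f : ∀ i, E i → β} (hf : ∀ i, StrictConcaveOn 𝕜 (s i) (f i)) :
    StrictConcaveOn 𝕜 (univ.pi s) fun y => ∑ i, f i (y i) := by
  refine ⟨convex_pi fun i _ => (hf i).1, fun y hy z hz hyz a b ha hb hab => ?_⟩
  obtain ⟨i, hi⟩ := Function.ne_iff.1 hyz
  simp only [Pi.add_apply, Pi.smul_apply, smul_sum, ← sum_add_distrib]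
  exact sum_lt_sum (fun j _ => (hf j).concaveOn.2 (hy j trivial) (hz j trivial) ha.le hb.le hab)
    ⟨i, mem_univ _, (hf i).2 (hy i trivial) (hz i trivial) hi ha hb hab⟩

theorem Matrix.vecMul_injective_of_span_col_eq_top {R m n : Type*} [CommSemiring R] [Fintype m]
    {M : Matrix m n R} (hM : Submodule.span R (range M.col) = ⊤) : Injective M.vecMul := by
  classical
  intro b c hbc
  apply (dotProductEquiv R m).injective
  exact LinearMap.ext_on_range hM fun j => congrFun hbc j

theorem convex_setOf_forall_pos_sum_mul {𝕜 m n : Type*} [Field 𝕜] [LinearOrder 𝕜]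
    [IsStrictOrderedRing 𝕜] [Fintype m] (M : Matrix m n 𝕜) :
    Convex 𝕜 {b : m → 𝕜 | ∀ j, 0 < ∑ i, b i * M i j} := by
  have hpre : {b : m → 𝕜 | ∀ j, 0 < ∑ i, b i * M i j} =
      M.vecMulLinear ⁻¹' univ.pi fun _ => Ioi 0 := by
    ext b
    simp [Matrix.vecMul, dotProduct]
  exact hpre ▸ (convex_pi fun _ _ => convex_Ioi 0).linear_preimage _

theorem Fintype.sum_subtype_pos_mul {ι R : Type*} [Fintype ι] [Semiring R] [LinearOrder R]
    {x : ι → R} (hx : ∀ i, 0 ≤ x i) (f : ι → R) :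
    ∑ i : {i // 0 < x i}, x i * f i = ∑ i, x i * f i := by
  classical
  calc _ = ∑ i ∈ univ with 0 < x i, x i * f i := (sum_subtype _ (by simp) _).symm
    _ = _ := sum_filter_of_ne fun i _ hi => (hx i).lt_of_ne' (left_ne_zero_of_mul hi)

/-- If `x ≥ 0` and the columns of `Π` corresponding to indices `j` with
`x_j > 0` span `ℝ^R`, then `f_row(·, x, Π)` is strictly convex on
`D = { b : Σ_i b_i Π_{i j} > 0 for all j }`. -/
theorem frow_strictConvexOn
    (J R : ℕ) (P : Matrix (Fin R) (Fin J) ℝ)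
    (x : Fin J → ℝ) (hx : ∀ j, 0 ≤ x j)
    (hspan : Submodule.span ℝ
      {v : Fin R → ℝ | ∃ j : Fin J, 0 < x j ∧ v = fun r => P r j} = ⊤) :
    StrictConvexOn ℝ {b : Fin R → ℝ | ∀ j : Fin J, 0 < ∑ i, b i * P i j}
      (fun b => frow b x P) := by
  let Q : Matrix (Fin R) {j // 0 < x j} ℝ := P.submatrix id Subtype.val
  have hQ : Injective Q.vecMul := by
    refine Matrix.vecMul_injective_of_span_col_eq_top (hspan ▸ congrArg _ ?_)
    ext v
    constructor
    · rintro ⟨j, rfl⟩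
      exact ⟨j, j.2, rfl⟩
    · rintro ⟨j, hj, rfl⟩
      exact ⟨⟨j, hj⟩, rfl⟩
  have hD := convex_setOf_forall_pos_sum_mul P
  have hlog : StrictConcaveOn ℝ (univ.pi fun _ => Ioi 0)
      fun y : {j // 0 < x j} → ℝ => ∑ j : {j // 0 < x j}, x j • Real.log (y j) :=
    StrictConcaveOn.sum_pi fun j => strictConcaveOn_log_Ioi.smul j.2
  refine (((dotProductEquiv ℝ (Fin R) 1).convexOn hD).sub_strictConcaveOn
    ((hlog.comp_linearMap_of_injective Q.vecMulLinear hQ).subset (fun b hb j _ => hb j) hD)).congr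
    fun b _ => ?_
  rw [frow, ← Fintype.sum_subtype_pos_mul hx]
  simp only [Pi.sub_apply, Function.comp_apply, dotProductEquiv_apply_apply,
    one_dotProduct, smul_eq_mul]
  rfl
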